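/- Suppose r, Ω, ψ satisfy the toroidally symmetric Einstein–Klein-Gordon system (EKG1)–(EKG5) on U, and let ϖ = (2rᵤrᵥr/Ω²)e^{4πgψ²} + r³/(2l²). If at a point p ∈ U one has rᵤ(p) ≤ 0 ≤ rᵥ(p), ϖ(p) ≥ 0, and ψ(p)² ≤ κ/(2π(9/4 − κ²)), then ∂ᵤϖ(p) ≤ 0 ≤ ∂ᵥϖ(p); that is, the renormalised Hawking mass is nonincreasing in u and nondecreasing in v at such points. -/

import Mathlib

/-!
Differentiating `ϖ` along `v` and eliminating `r_{uv}` and `∂ᵥ(rᵥ/Ω²)` with (EKG3) and (EKG2)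
gives the identity
`r ∂ᵥϖ = 4πg²ψ² rᵥ ϖ - 8π e^{4πgψ²} rᵤ r (rψᵥ - g rᵥ ψ)²/Ω² + rᵥ r³ f(ψ²)/l²`,
and symmetrically along `u` with (EKG1), (EKG3) and `r_{vu} = r_{uv}`. Under the sign
conditions every term has the required sign as soon as `f(ψ²) ≥ 0`, and this is where the
smallness of `ψ²` enters.
-/

/-- Partial derivative in the first (`u`) coordinate. -/
noncomputable def pdu (f : ℝ × ℝ → ℝ) (p : ℝ × ℝ) : ℝ := deriv (fun u => f (u, p.2)) p.1

/-- Partial derivative in the second (`v`) coordinate. -/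
noncomputable def pdv (f : ℝ × ℝ → ℝ) (p : ℝ × ℝ) : ℝ := deriv (fun v => f (p.1, v)) p.2

/-- The final renormalised Hawking mass `ϖ = (2rᵤrᵥr/Ω²)e^{4πgψ²} + r³/(2l²)`. -/
noncomputable def varpi (l g : ℝ) (r Ω ψ : ℝ × ℝ → ℝ) (q : ℝ × ℝ) : ℝ :=
  2 * pdu r q * pdv r q * r q / (Ω q) ^ 2 * Real.exp (4 * Real.pi * g * (ψ q) ^ 2)
    + (r q) ^ 3 / (2 * l ^ 2)

open Real Topology

section PartialDerivatives

variable {f g : ℝ × ℝ → ℝ} {p : ℝ × ℝ}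

theorem DifferentiableAt.hasDerivAt_pdu (hf : DifferentiableAt ℝ f p) :
    HasDerivAt (fun u => f (u, p.2)) (pdu f p) p.1 :=
  (hf.comp p.1 (differentiableAt_id.prodMk (differentiableAt_const _))).hasDerivAt

theorem DifferentiableAt.hasDerivAt_pdv (hf : DifferentiableAt ℝ f p) :
    HasDerivAt (fun v => f (p.1, v)) (pdv f p) p.2 :=
  (hf.comp p.2 ((differentiableAt_const _).prodMk differentiableAt_id)).hasDerivAt

theorem DifferentiableAt.pdu_eq_fderiv (hf : DifferentiableAt ℝ f p) :
    pdu f p = fderiv ℝ f p (1, 0) :=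
  (hf.hasFDerivAt.comp_hasDerivAt p.1 ((hasDerivAt_id _).prodMk (hasDerivAt_const _ _))).deriv

theorem DifferentiableAt.pdv_eq_fderiv (hf : DifferentiableAt ℝ f p) :
    pdv f p = fderiv ℝ f p (0, 1) :=
  (hf.hasFDerivAt.comp_hasDerivAt p.2 ((hasDerivAt_const _ _).prodMk (hasDerivAt_id _))).deriv

theorem Filter.EventuallyEq.pdu_eq (h : f =ᶠ[𝓝 p] g) : pdu f p = pdu g p :=
  (h.comp_tendsto ((continuous_id.prodMk continuous_const).tendsto' p.1 p rfl)).deriv_eq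

theorem Filter.EventuallyEq.pdv_eq (h : f =ᶠ[𝓝 p] g) : pdv f p = pdv g p :=
  (h.comp_tendsto ((continuous_const.prodMk continuous_id).tendsto' p.2 p rfl)).deriv_eq

theorem ContDiffAt.differentiableAt_fderiv (hf : ContDiffAt ℝ 2 f p) :
    DifferentiableAt ℝ (fderiv ℝ f) p :=
  (hf.fderiv_right (m := 1) (by norm_num)).differentiableAt one_ne_zero

theorem ContDiffAt.pdu_eventuallyEq (hf : ContDiffAt ℝ 2 f p) :
    pdu f =ᶠ[𝓝 p] fun q => fderiv ℝ f q (1, 0) :=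
  (hf.eventually (by simp)).mono fun _ hq => (hq.differentiableAt two_ne_zero).pdu_eq_fderiv

theorem ContDiffAt.pdv_eventuallyEq (hf : ContDiffAt ℝ 2 f p) :
    pdv f =ᶠ[𝓝 p] fun q => fderiv ℝ f q (0, 1) :=
  (hf.eventually (by simp)).mono fun _ hq => (hq.differentiableAt two_ne_zero).pdv_eq_fderiv

theorem ContDiffAt.hasFDerivAt_fderiv_apply (hf : ContDiffAt ℝ 2 f p) (v : ℝ × ℝ) :
    HasFDerivAt (fun q => fderiv ℝ f q v)
      ((ContinuousLinearMap.apply ℝ ℝ v).comp (fderiv ℝ (fderiv ℝ f) p)) p :=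
  (ContinuousLinearMap.apply ℝ ℝ v).hasFDerivAt.comp p hf.differentiableAt_fderiv.hasFDerivAt

theorem ContDiffAt.differentiableAt_pdu (hf : ContDiffAt ℝ 2 f p) :
    DifferentiableAt ℝ (pdu f) p :=
  (hf.hasFDerivAt_fderiv_apply _).differentiableAt.congr_of_eventuallyEq hf.pdu_eventuallyEq

theorem ContDiffAt.differentiableAt_pdv (hf : ContDiffAt ℝ 2 f p) :
    DifferentiableAt ℝ (pdv f) p :=
  (hf.hasFDerivAt_fderiv_apply _).differentiableAt.congr_of_eventuallyEq hf.pdv_eventuallyEq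

theorem ContDiffAt.pdu_pdv_eq_pdv_pdu (hf : ContDiffAt ℝ 2 f p) :
    pdu (pdv f) p = pdv (pdu f) p := by
  rw [hf.pdv_eventuallyEq.pdu_eq, hf.pdu_eventuallyEq.pdv_eq,
    (hf.hasFDerivAt_fderiv_apply _).differentiableAt.pdu_eq_fderiv,
    (hf.hasFDerivAt_fderiv_apply _).differentiableAt.pdv_eq_fderiv,
    (hf.hasFDerivAt_fderiv_apply _).fderiv, (hf.hasFDerivAt_fderiv_apply _).fderiv]
  exact hf.isSymmSndFDerivAt (by simp) _ _

end PartialDerivatives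

theorem Real.exp_le_quadratic_of_nonpos {x : ℝ} (hx : x ≤ 0) : exp x ≤ 1 + x + x ^ 2 / 2 := by
  have hmono : Monotone fun y : ℝ => exp y - (1 + y + y ^ 2 / 2) := by
    refine monotone_of_hasDerivAt_nonneg (f' := fun y => exp y - (1 + y)) (fun y => ?_)
      fun y => sub_nonneg.2 (by linarith [add_one_le_exp y])
    exact ((hasDerivAt_exp y).sub (((hasDerivAt_id y).const_add 1).add
      ((hasDerivAt_pow 2 y).div_const 2))).congr_deriv (by norm_num)
  simpa using hmono hx

/-- The function `f` of the paper. -/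
noncomputable def massF (a g x : ℝ) : ℝ :=
  exp (4 * π * g * x) * (4 * π * a * x - 3 / 2) - 2 * π * g ^ 2 * x + 3 / 2

theorem massF_nonneg {κ a g x : ℝ} (hκ : κ ^ 2 < 9 / 4) (ha : a = κ ^ 2 / 2 - 9 / 8)
    (hg : g = -3 / 2 + κ) (hx0 : 0 ≤ x) (hx : x ≤ κ / (2 * π * (9 / 4 - κ ^ 2))) :
    0 ≤ massF a g x := by
  have hπ := pi_pos
  have hκx : 0 ≤ κ + 4 * π * a * x := by
    rw [le_div_iff₀ (by nlinarith)] at hx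
    subst ha
    nlinarith
  have hgx : 4 * π * g * x ≤ 0 := by
    have : g ≤ 0 := by nlinarith
    have := mul_nonneg hπ.le hx0
    nlinarith
  have hax : 4 * π * a * x - 3 / 2 ≤ 0 := by
    have : a ≤ 0 := by nlinarith
    have := mul_nonneg hπ.le hx0
    nlinarith
  have hexp := mul_le_mul_of_nonpos_right (exp_le_quadratic_of_nonpos hgx) hax
  -- As `2a = g² + 3g`, replacing the exponential by its quadratic Taylor polynomial
  -- turns `f(x)` into `8π²g²x²(κ + 4πax)`.
  have htaylor : (1 + 4 * π * g * x + (4 * π * g * x) ^ 2 / 2) * (4 * π * a * x - 3 / 2)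
      - 2 * π * g ^ 2 * x + 3 / 2 = 8 * π ^ 2 * g ^ 2 * x ^ 2 * (κ + 4 * π * a * x) := by
    subst ha hg
    ring
  have := mul_nonneg (by positivity : 0 ≤ 8 * π ^ 2 * g ^ 2 * x ^ 2) hκx
  unfold massF
  linarith

section Mass

variable (l g : ℝ)

/-- The derivative of `2 t w r e^{4πgψ²} + r³/(2l²)` when `r, t, w, ψ` vary with rates
`s, m, w', ψ'`; for `w = s/Ω²` it is the derivative of `ϖ` along the coordinate in which `r` has
rate `s`. -/
noncomputable def massDeriv (t w r ψ s m w' ψ' : ℝ) : ℝ :=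
  2 * (m * w * r * exp (4 * π * g * ψ ^ 2) + t * w' * r * exp (4 * π * g * ψ ^ 2)
      + t * w * s * exp (4 * π * g * ψ ^ 2)
      + t * w * r * (exp (4 * π * g * ψ ^ 2) * (8 * π * g * ψ * ψ')))
    + 3 * r ^ 2 * s / (2 * l ^ 2)

theorem hasDerivAt_mass {R T W Ψ : ℝ → ℝ} {x s m w' ψ' : ℝ} (hR : HasDerivAt R s x)
    (hT : HasDerivAt T m x) (hW : HasDerivAt W w' x) (hΨ : HasDerivAt Ψ ψ' x) :
    HasDerivAt (fun y => 2 * T y * W y * R y * exp (4 * π * g * Ψ y ^ 2) + R y ^ 3 / (2 * l ^ 2))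
      (massDeriv l g (T x) (W x) (R x) (Ψ x) s m w' ψ') x := by
  have hE := ((hΨ.fun_pow 2).const_mul (4 * π * g)).exp
  refine ((((hT.const_mul 2).fun_mul hW).fun_mul hR).fun_mul hE).add
    ((hR.fun_pow 3).div_const (2 * l ^ 2)) |>.congr_deriv ?_
  unfold massDeriv
  push_cast
  ring

variable {r Ω ψ : ℝ × ℝ → ℝ} {p : ℝ × ℝ}

theorem pdu_varpi (hr : ContDiffAt ℝ 2 r p) (hΩ : DifferentiableAt ℝ Ω p)
    (hψ : DifferentiableAt ℝ ψ p) (hΩ0 : Ω p ≠ 0) :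
    pdu (varpi l g r Ω ψ) p = massDeriv l g (pdv r p) (pdu r p / Ω p ^ 2) (r p) (ψ p) (pdu r p)
      (pdu (pdv r) p) (pdu (fun q => pdu r q / Ω q ^ 2) p) (pdu ψ p) := by
  have hW : DifferentiableAt ℝ (fun q => pdu r q / Ω q ^ 2) p := by
    have := hr.differentiableAt_pdu
    fun_prop (disch := exact pow_ne_zero 2 hΩ0)
  refine Eq.trans ?_ (hasDerivAt_mass l g (hr.differentiableAt two_ne_zero).hasDerivAt_pdu
    hr.differentiableAt_pdv.hasDerivAt_pdu hW.hasDerivAt_pdu hψ.hasDerivAt_pdu).deriv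
  unfold pdu
  congr 1
  funext u
  unfold varpi pdu
  ring

theorem pdv_varpi (hr : ContDiffAt ℝ 2 r p) (hΩ : DifferentiableAt ℝ Ω p)
    (hψ : DifferentiableAt ℝ ψ p) (hΩ0 : Ω p ≠ 0) :
    pdv (varpi l g r Ω ψ) p = massDeriv l g (pdu r p) (pdv r p / Ω p ^ 2) (r p) (ψ p) (pdv r p)
      (pdv (pdu r) p) (pdv (fun q => pdv r q / Ω q ^ 2) p) (pdv ψ p) := by
  have hW : DifferentiableAt ℝ (fun q => pdv r q / Ω q ^ 2) p := by
    have := hr.differentiableAt_pdv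
    fun_prop (disch := exact pow_ne_zero 2 hΩ0)
  refine Eq.trans ?_ (hasDerivAt_mass l g (hr.differentiableAt two_ne_zero).hasDerivAt_pdv
    hr.differentiableAt_pdu.hasDerivAt_pdv hW.hasDerivAt_pdv hψ.hasDerivAt_pdv).deriv
  unfold pdv
  congr 1
  funext v
  unfold varpi pdv
  ring

end Mass

section Sign

variable {l a g r ω ψ s t m w' ψ' : ℝ}

theorem mul_massDeriv_eq (hr : r ≠ 0) (hω : ω ≠ 0) (hl : l ≠ 0)
    (hm : m = -(s * t) / r + 2 * π * a * r / l ^ 2 * ω ^ 2 * ψ ^ 2 - 3 / 4 * (r / l ^ 2) * ω ^ 2)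
    (hw : w' = -(4 * π) * r * ψ' ^ 2 / ω ^ 2) :
    r * massDeriv l g t (s / ω ^ 2) r ψ s m w' ψ' =
      4 * π * g ^ 2 * ψ ^ 2 * s
          * (2 * s * t * r / ω ^ 2 * exp (4 * π * g * ψ ^ 2) + r ^ 3 / (2 * l ^ 2))
        - 8 * π * exp (4 * π * g * ψ ^ 2) * t * r * (r * ψ' - g * s * ψ) ^ 2 / ω ^ 2
        + s * r ^ 3 * massF a g (ψ ^ 2) / l ^ 2 := by
  subst hm hw
  unfold massDeriv massF
  field_simp
  ring

variable (hr : 0 < r) (hω : ω ≠ 0) (hl : l ≠ 0)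
    (hm : m = -(s * t) / r + 2 * π * a * r / l ^ 2 * ω ^ 2 * ψ ^ 2 - 3 / 4 * (r / l ^ 2) * ω ^ 2)
    (hw : w' = -(4 * π) * r * ψ' ^ 2 / ω ^ 2)
    (hM : 0 ≤ 2 * s * t * r / ω ^ 2 * exp (4 * π * g * ψ ^ 2) + r ^ 3 / (2 * l ^ 2))
    (hf : 0 ≤ massF a g (ψ ^ 2))
include hr hω hl hm hw hM hf

theorem massDeriv_nonneg (ht : t ≤ 0) (hs : 0 ≤ s) :
    0 ≤ massDeriv l g t (s / ω ^ 2) r ψ s m w' ψ' := by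
  refine nonneg_of_mul_nonneg_right (a := r) ?_ hr
  rw [mul_massDeriv_eq hr.ne' hω hl hm hw]
  have h1 : 0 ≤ 4 * π * g ^ 2 * ψ ^ 2 * s
      * (2 * s * t * r / ω ^ 2 * exp (4 * π * g * ψ ^ 2) + r ^ 3 / (2 * l ^ 2)) :=
    mul_nonneg (by positivity) hM
  have h2 : 0 ≤ 8 * π * exp (4 * π * g * ψ ^ 2) * (-t) * r * (r * ψ' - g * s * ψ) ^ 2 / ω ^ 2 := by
    have := neg_nonneg.2 ht
    positivity
  have h3 : 0 ≤ s * r ^ 3 * massF a g (ψ ^ 2) / l ^ 2 := by positivity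
  linear_combination h1 + h2 + h3

theorem massDeriv_nonpos (hs : s ≤ 0) (ht : 0 ≤ t) :
    massDeriv l g t (s / ω ^ 2) r ψ s m w' ψ' ≤ 0 := by
  refine nonpos_of_mul_nonpos_right (a := r) ?_ hr
  rw [mul_massDeriv_eq hr.ne' hω hl hm hw]
  have h1 : 0 ≤ 4 * π * g ^ 2 * ψ ^ 2 * (-s)
      * (2 * s * t * r / ω ^ 2 * exp (4 * π * g * ψ ^ 2) + r ^ 3 / (2 * l ^ 2)) := by
    have := neg_nonneg.2 hs
    exact mul_nonneg (by positivity) hM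
  have h2 : 0 ≤ 8 * π * exp (4 * π * g * ψ ^ 2) * t * r * (r * ψ' - g * s * ψ) ^ 2 / ω ^ 2 := by
    positivity
  have h3 : 0 ≤ (-s) * r ^ 3 * massF a g (ψ ^ 2) / l ^ 2 := by
    have := neg_nonneg.2 hs
    positivity
  linear_combination h1 + h2 + h3

end Sign

theorem stmt_5_general (U : Set (ℝ × ℝ)) (hU : IsOpen U)
    (r Ω ψ : ℝ × ℝ → ℝ)
    (l κ a g : ℝ) (hl : 0 < l) (hκ : κ ∈ Set.Ioo (0 : ℝ) 1)
    (ha : a = κ ^ 2 / 2 - 9 / 8) (hg : g = -3 / 2 + κ)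
    (hrC : ContDiffOn ℝ 2 r U) (hΩC : ContDiffOn ℝ 2 Ω U) (hψC : ContDiffOn ℝ 2 ψ U)
    (hrpos : ∀ p ∈ U, 0 < r p) (hΩpos : ∀ p ∈ U, 0 < Ω p)
    (hEKG1 : ∀ p ∈ U, pdu (fun q => pdu r q / (Ω q) ^ 2) p
        = -(4 * Real.pi) * r p * (pdu ψ p) ^ 2 / (Ω p) ^ 2)
    (hEKG2 : ∀ p ∈ U, pdv (fun q => pdv r q / (Ω q) ^ 2) p
        = -(4 * Real.pi) * r p * (pdv ψ p) ^ 2 / (Ω p) ^ 2)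
    (hEKG3 : ∀ p ∈ U, pdv (pdu r) p = -(pdu r p * pdv r p) / r p
        + (2 * Real.pi * a * r p / l ^ 2) * (Ω p) ^ 2 * (ψ p) ^ 2
        - (3 / 4) * (r p / l ^ 2) * (Ω p) ^ 2)
    (p : ℝ × ℝ) (hp : p ∈ U)
    (hpu : pdu r p ≤ 0) (hpv : 0 ≤ pdv r p)
    (hϖ : 0 ≤ varpi l g r Ω ψ p)
    (hψsmall : (ψ p) ^ 2 ≤ κ / (2 * Real.pi * (9 / 4 - κ ^ 2))) :
    pdu (varpi l g r Ω ψ) p ≤ 0 ∧ 0 ≤ pdv (varpi l g r Ω ψ) p := by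
  have hr := hrC.contDiffAt (hU.mem_nhds hp)
  have hΩ := (hΩC.contDiffAt (hU.mem_nhds hp)).differentiableAt two_ne_zero
  have hψ := (hψC.contDiffAt (hU.mem_nhds hp)).differentiableAt two_ne_zero
  have hΩp := (hΩpos p hp).ne'
  have hf : 0 ≤ massF a g (ψ p ^ 2) :=
    massF_nonneg (by nlinarith [hκ.1, hκ.2]) ha hg (sq_nonneg _) hψsmall
  constructor
  · rw [pdu_varpi l g hr hΩ hψ hΩp, hr.pdu_pdv_eq_pdv_pdu]
    exact massDeriv_nonpos (hrpos p hp) hΩp hl.ne' (hEKG3 p hp) (hEKG1 p hp) hϖ hf hpu hpv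
  · have hϖ' : 0 ≤ 2 * pdv r p * pdu r p * r p / Ω p ^ 2 * exp (4 * π * g * ψ p ^ 2)
        + r p ^ 3 / (2 * l ^ 2) := by
      rwa [varpi, mul_right_comm 2 (pdu r p)] at hϖ
    rw [pdv_varpi l g hr hΩ hψ hΩp]
    exact massDeriv_nonneg (hrpos p hp) hΩp hl.ne' (by rw [hEKG3 p hp]; ring) (hEKG2 p hp)
      hϖ' hf hpu hpv

/-- Monotonicity of the renormalised Hawking mass: if `r, Ω, ψ` satisfy the
toroidally symmetric Einstein–Klein-Gordon system (EKG1)–(EKG5) on `U`, and at a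
point `p ∈ U` one has `rᵤ(p) ≤ 0 ≤ rᵥ(p)`, `ϖ(p) ≥ 0` and
`ψ(p)² ≤ κ/(2π(9/4 − κ²))`, then `∂ᵤϖ(p) ≤ 0 ≤ ∂ᵥϖ(p)`. -/
theorem stmt_5 (U : Set (ℝ × ℝ)) (hU : IsOpen U)
    (r Ω ψ : ℝ × ℝ → ℝ)
    (l κ a g : ℝ) (hl : 0 < l) (hκ : κ ∈ Set.Ioo (0 : ℝ) 1)
    (ha : a = κ ^ 2 / 2 - 9 / 8) (hg : g = -3 / 2 + κ)
    (hrC : ContDiffOn ℝ 2 r U) (hΩC : ContDiffOn ℝ 2 Ω U) (hψC : ContDiffOn ℝ 2 ψ U)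
    (hrpos : ∀ p ∈ U, 0 < r p) (hΩpos : ∀ p ∈ U, 0 < Ω p)
    (hEKG1 : ∀ p ∈ U, pdu (fun q => pdu r q / (Ω q) ^ 2) p
        = -(4 * Real.pi) * r p * (pdu ψ p) ^ 2 / (Ω p) ^ 2)
    (hEKG2 : ∀ p ∈ U, pdv (fun q => pdv r q / (Ω q) ^ 2) p
        = -(4 * Real.pi) * r p * (pdv ψ p) ^ 2 / (Ω p) ^ 2)
    (hEKG3 : ∀ p ∈ U, pdv (pdu r) p = -(pdu r p * pdv r p) / r p
        + (2 * Real.pi * a * r p / l ^ 2) * (Ω p) ^ 2 * (ψ p) ^ 2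
        - (3 / 4) * (r p / l ^ 2) * (Ω p) ^ 2)
    (hEKG4 : ∀ p ∈ U, pdv (pdu (fun q => Real.log (Ω q))) p
        = -(4 * Real.pi) * pdu ψ p * pdv ψ p + (pdu r p * pdv r p) / (r p) ^ 2)
    (hEKG5 : ∀ p ∈ U, pdv (pdu ψ) p = -(pdu r p / r p) * pdv ψ p
        - (pdv r p / r p) * pdu ψ p - ((Ω p) ^ 2 * a / (2 * l ^ 2)) * ψ p)
    (p : ℝ × ℝ) (hp : p ∈ U)
    (hpu : pdu r p ≤ 0) (hpv : 0 ≤ pdv r p)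
    (hϖ : 0 ≤ varpi l g r Ω ψ p)
    (hψsmall : (ψ p) ^ 2 ≤ κ / (2 * Real.pi * (9 / 4 - κ ^ 2))) :
    pdu (varpi l g r Ω ψ) p ≤ 0 ∧ 0 ≤ pdv (varpi l g r Ω ψ) p :=
  stmt_5_general U hU r Ω ψ l κ a g hl hκ ha hg hrC hΩC hψC hrpos hΩpos hEKG1 hEKG2 hEKG3 p hp hpu
    hpv hϖ hψsmall
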